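/- arXiv:2305.18020 — 2 statements merged into one kernel-verified Lean document; each statement's English description precedes it below -/
import Mathlib

section
/- If f is logconcave, then for any 0 ≤ a < b ≤ 1 and any ε₁, ε₂ ≥ 0 with a + ε₁ < b + ε₂ and b + max(ε₁, ε₂) ≤ 1, the conditional mean satisfies φ(a + ε₁, b + ε₂) ≤ φ(a, b) + max(ε₁, ε₂). -/
/-!
Raising either endpoint of the interval can only raise the conditional mean, since the mean over
`(a, b)` lies between the means over `(a, c)` and `(c, b)`. This reduces the claim to a pure
translation by `ε = max ε₁ ε₂`, and `φ(a + ε, b + ε) - ε` is the mean of the density `f (· + ε)`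
on `(a, b)`. Logconcavity makes the likelihood ratio `f (t + ε) / f t` nonincreasing in `t`, and
by Chebyshev's integral inequality a density with a nonincreasing likelihood ratio against `f`
has a mean no larger than that of `f`.
-/

open MeasureTheory Set

/-- The mean of the density `f` conditional on the interval `(a, b)`. -/
noncomputable def condMean (g : ℝ → ℝ) (a b : ℝ) : ℝ :=
  (∫ t in a..b, t * g t) / (∫ t in a..b, g t)

/-- A strictly positive function on `[0,1]` is logconcave if its log is concave there. -/
def LogConcaveOn01 (g : ℝ → ℝ) : Prop :=
  ConcaveOn ℝ (Icc (0:ℝ) 1) fun t => Real.log (g t)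

section Field

variable {𝕜 : Type*} [Field 𝕜] [LinearOrder 𝕜] [IsStrictOrderedRing 𝕜]

theorem div_le_add_div_add {M N A B : 𝕜} (hA : 0 < A) (hB : 0 < B) (h : M / A ≤ N / B) :
    M / A ≤ (M + N) / (A + B) := by
  rw [div_le_div_iff₀ hA hB] at h
  rw [div_le_div_iff₀ hA (add_pos hA hB)]
  linarith

theorem add_div_add_le_div {M N A B : 𝕜} (hA : 0 < A) (hB : 0 < B) (h : M / A ≤ N / B) :
    (M + N) / (A + B) ≤ N / B := by
  rw [div_le_div_iff₀ hA hB] at h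
  rw [div_le_div_iff₀ (add_pos hA hB) hB]
  linarith

theorem ConcaveOn.map_add_sub_map_le {s : Set 𝕜} {φ : 𝕜 → 𝕜} (hφ : ConcaveOn 𝕜 s φ)
    {x y d : 𝕜} (hx : x ∈ s) (hyd : y + d ∈ s) (hxy : x ≤ y) (hd : 0 ≤ d) :
    φ (y + d) - φ y ≤ φ (x + d) - φ x := by
  rcases (show x ≤ y + d by linarith).eq_or_lt with hxyd | hxyd
  · obtain ⟨rfl, rfl⟩ : y = x ∧ d = 0 := ⟨by linarith, by linarith⟩
    simp
  -- `y` and `x + d` are the convex combinations of `x` and `y + d` with swapped weights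
  have hL : 0 < y + d - x := sub_pos.2 hxyd
  have hμ : 0 ≤ d / (y + d - x) := by positivity
  have hν : 0 ≤ (y - x) / (y + d - x) := div_nonneg (sub_nonneg.2 hxy) hL.le
  have hsum : d / (y + d - x) + (y - x) / (y + d - x) = 1 := by field_simp; ring
  have hy := hφ.2 hx hyd hμ hν hsum
  have hxd := hφ.2 hx hyd hν hμ (by linarith)
  simp only [smul_eq_mul] at hy hxd
  have ey : d / (y + d - x) * x + (y - x) / (y + d - x) * (y + d) = y := by field_simp; ring
  have exd : (y - x) / (y + d - x) * x + d / (y + d - x) * (y + d) = x + d := by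
    field_simp; ring
  rw [ey] at hy
  rw [exd] at hxd
  linear_combination hy + hxd - (φ x + φ (y + d)) * hsum

end Field

theorem IntervalIntegrable.id_mul {f : ℝ → ℝ} {a b : ℝ} (hf : IntervalIntegrable f volume a b) :
    IntervalIntegrable (fun t => t * f t) volume a b :=
  hf.continuousOn_mul continuousOn_id

section CondMean

variable {f g : ℝ → ℝ} {a b c : ℝ}

theorem integral_id_mul_le_mul_integral (hab : a ≤ b) (hf : IntervalIntegrable f volume a b)
    (hf0 : ∀ t ∈ Icc a b, 0 ≤ f t) : ∫ t in a..b, t * f t ≤ b * ∫ t in a..b, f t := by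
  rw [← intervalIntegral.integral_const_mul]
  exact intervalIntegral.integral_mono_on hab hf.id_mul (hf.const_mul b)
    fun t ht => mul_le_mul_of_nonneg_right ht.2 (hf0 t ht)

theorem mul_integral_le_integral_id_mul (hab : a ≤ b) (hf : IntervalIntegrable f volume a b)
    (hf0 : ∀ t ∈ Icc a b, 0 ≤ f t) : a * ∫ t in a..b, f t ≤ ∫ t in a..b, t * f t := by
  rw [← intervalIntegral.integral_const_mul]
  exact intervalIntegral.integral_mono_on hab (hf.const_mul a) hf.id_mul
    fun t ht => mul_le_mul_of_nonneg_right ht.1 (hf0 t ht)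

theorem condMean_le_right (hab : a ≤ b) (hf : IntervalIntegrable f volume a b)
    (hf0 : ∀ t ∈ Icc a b, 0 ≤ f t) (hF : 0 < ∫ t in a..b, f t) : condMean f a b ≤ b :=
  (div_le_iff₀ hF).2 (integral_id_mul_le_mul_integral hab hf hf0)

theorem left_le_condMean (hab : a ≤ b) (hf : IntervalIntegrable f volume a b)
    (hf0 : ∀ t ∈ Icc a b, 0 ≤ f t) (hF : 0 < ∫ t in a..b, f t) : a ≤ condMean f a b :=
  (le_div_iff₀ hF).2 (mul_integral_le_integral_id_mul hab hf hf0)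

theorem condMean_mem_Icc_of_adjacent (hac : a < c) (hcb : c < b)
    (hfac : IntervalIntegrable f volume a c) (hfcb : IntervalIntegrable f volume c b)
    (hpos : ∀ t ∈ Icc a b, 0 < f t) :
    condMean f a b ∈ Icc (condMean f a c) (condMean f c b) := by
  have hpos_ac : ∀ t ∈ Icc a c, 0 < f t := fun t ht => hpos t ⟨ht.1, ht.2.trans hcb.le⟩
  have hpos_cb : ∀ t ∈ Icc c b, 0 < f t := fun t ht => hpos t ⟨hac.le.trans ht.1, ht.2⟩
  have hA : 0 < ∫ t in a..c, f t := intervalIntegral.intervalIntegral_pos_of_pos_on hfac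
    (fun t ht => hpos_ac t (Ioo_subset_Icc_self ht)) hac
  have hB : 0 < ∫ t in c..b, f t := intervalIntegral.intervalIntegral_pos_of_pos_on hfcb
    (fun t ht => hpos_cb t (Ioo_subset_Icc_self ht)) hcb
  have hle : condMean f a c ≤ condMean f c b :=
    (condMean_le_right hac.le hfac (fun t ht => (hpos_ac t ht).le) hA).trans
      (left_le_condMean hcb.le hfcb (fun t ht => (hpos_cb t ht).le) hB)
  unfold condMean at hle ⊢
  rw [← intervalIntegral.integral_add_adjacent_intervals hfac hfcb,
    ← intervalIntegral.integral_add_adjacent_intervals hfac.id_mul hfcb.id_mul]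
  exact ⟨div_le_add_div_add hA hB hle, add_div_add_le_div hA hB hle⟩

theorem condMean_le_condMean_of_le_right (hac : a < c) (hcb : c ≤ b)
    (hfac : IntervalIntegrable f volume a c) (hfcb : IntervalIntegrable f volume c b)
    (hpos : ∀ t ∈ Icc a b, 0 < f t) : condMean f a c ≤ condMean f a b := by
  rcases hcb.eq_or_lt with rfl | hcb
  · rfl
  · exact (condMean_mem_Icc_of_adjacent hac hcb hfac hfcb hpos).1

theorem condMean_le_condMean_of_le_left (hac : a ≤ c) (hcb : c < b)
    (hfac : IntervalIntegrable f volume a c) (hfcb : IntervalIntegrable f volume c b)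
    (hpos : ∀ t ∈ Icc a b, 0 < f t) : condMean f a b ≤ condMean f c b := by
  rcases hac.eq_or_lt with rfl | hac
  · rfl
  · exact (condMean_mem_Icc_of_adjacent hac hcb hfac hfcb hpos).2

/-- Chebyshev's integral inequality in cross-multiplied form: if `g / f` is nonincreasing on
`[a, b]`, the `g`-weighted mean of `t` is at most the `f`-weighted one. -/
theorem integral_id_mul_mul_integral_le (hab : a ≤ b) (hf : IntervalIntegrable f volume a b)
    (hg : IntervalIntegrable g volume a b)
    (hfg : ∀ s ∈ Icc a b, ∀ t ∈ Icc a b, s ≤ t → g t * f s ≤ g s * f t) :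
    (∫ t in a..b, t * g t) * (∫ t in a..b, f t) ≤
      (∫ t in a..b, t * f t) * ∫ t in a..b, g t := by
  set F := ∫ t in a..b, f t
  set G := ∫ t in a..b, g t
  set SF := ∫ t in a..b, t * f t
  set SG := ∫ t in a..b, t * g t
  -- integrate `(t - s) (g s f t - g t f s) ≥ 0` first in `s`, then in `t`
  have inner : ∀ t ∈ Icc a b, 0 ≤ f t * (t * G - SG) - g t * (t * F - SF) := by
    intro t ht
    have hint : ∫ s in a..b, (t - s) * (g s * f t - g t * f s) =
        f t * (t * G - SG) - g t * (t * F - SF) := by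
      have hexp : (fun s => (t - s) * (g s * f t - g t * f s)) = fun s =>
          (t * f t * g s - f t * (s * g s)) - (t * g t * f s - g t * (s * f s)) := by
        funext s; ring
      rw [hexp, intervalIntegral.integral_sub ((hg.const_mul _).sub (hg.id_mul.const_mul _))
          ((hf.const_mul _).sub (hf.id_mul.const_mul _)),
        intervalIntegral.integral_sub (hg.const_mul _) (hg.id_mul.const_mul _),
        intervalIntegral.integral_sub (hf.const_mul _) (hf.id_mul.const_mul _)]
      simp only [intervalIntegral.integral_const_mul]
      ring
    rw [← hint]
    refine intervalIntegral.integral_nonneg hab fun s hs => ?_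
    rcases le_total s t with hst | hts
    · exact mul_nonneg (sub_nonneg.2 hst) (sub_nonneg.2 (hfg s hs t ht hst))
    · exact mul_nonneg_of_nonpos_of_nonpos (sub_nonpos.2 hts) (sub_nonpos.2 (hfg t ht s hs hts))
  have outer : ∫ t in a..b, f t * (t * G - SG) - g t * (t * F - SF) = 2 * (SF * G - SG * F) := by
    have hexp : (fun t => f t * (t * G - SG) - g t * (t * F - SF)) = fun t =>
        (t * f t * G - f t * SG) - (t * g t * F - g t * SF) := by
      funext t; ring
    rw [hexp, intervalIntegral.integral_sub ((hf.id_mul.mul_const _).sub (hf.mul_const _))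
        ((hg.id_mul.mul_const _).sub (hg.mul_const _)),
      intervalIntegral.integral_sub (hf.id_mul.mul_const _) (hf.mul_const _),
      intervalIntegral.integral_sub (hg.id_mul.mul_const _) (hg.mul_const _)]
    simp only [intervalIntegral.integral_mul_const]
    ring
  have := outer ▸ intervalIntegral.integral_nonneg (μ := volume) hab inner
  linarith

theorem condMean_le_condMean_of_ratio (hab : a ≤ b) (hf : IntervalIntegrable f volume a b)
    (hg : IntervalIntegrable g volume a b) (hF : 0 < ∫ t in a..b, f t)
    (hG : 0 < ∫ t in a..b, g t)
    (hfg : ∀ s ∈ Icc a b, ∀ t ∈ Icc a b, s ≤ t → g t * f s ≤ g s * f t) :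
    condMean g a b ≤ condMean f a b :=
  (div_le_div_iff₀ hG hF).2 (integral_id_mul_mul_integral_le hab hf hg hfg)

theorem condMean_add_add (hf : IntervalIntegrable f volume (a + c) (b + c))
    (hF : ∫ t in a..b, f (t + c) ≠ 0) :
    condMean f (a + c) (b + c) = condMean (fun t => f (t + c)) a b + c := by
  have hfc : IntervalIntegrable (fun t => f (t + c)) volume a b := by
    simpa using hf.comp_add_right c
  have hnum : ∫ t in (a + c)..(b + c), t * f t =
      (∫ t in a..b, t * f (t + c)) + c * ∫ t in a..b, f (t + c) := by
    rw [← intervalIntegral.integral_comp_add_right (fun t => t * f t) c,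
      ← intervalIntegral.integral_const_mul, ← intervalIntegral.integral_add hfc.id_mul
      (hfc.const_mul c)]
    simp only [add_mul, add_comm]
  rw [condMean, condMean, hnum, ← intervalIntegral.integral_comp_add_right f c, add_div,
    mul_div_cancel_right₀ _ hF]

end CondMean

section LogConcave

variable {f : ℝ → ℝ}

theorem LogConcaveOn01.map_add_mul_le_map_add_mul (hlc : LogConcaveOn01 f)
    (hpos : ∀ t ∈ Icc (0 : ℝ) 1, 0 < f t) {s t d : ℝ} (hs : 0 ≤ s) (hst : s ≤ t) (hd : 0 ≤ d)
    (htd : t + d ≤ 1) : f (t + d) * f s ≤ f (s + d) * f t := by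
  have hlog := hlc.map_add_sub_map_le ⟨hs, by linarith⟩ ⟨by linarith, htd⟩ hst hd
  have hpos' : ∀ x, 0 ≤ x → x ≤ t + d → 0 < f x := fun x hx0 hx1 => hpos x ⟨hx0, by linarith⟩
  have h1 := hpos' (t + d) (by linarith) le_rfl
  have h2 := hpos' s hs (by linarith)
  have h3 := hpos' (s + d) (by linarith) (by linarith)
  have h4 := hpos' t (by linarith) (by linarith)
  rw [← Real.log_le_log_iff (by positivity) (by positivity), Real.log_mul h1.ne' h2.ne',
    Real.log_mul h3.ne' h4.ne']
  linarith

theorem LogConcaveOn01.condMean_add_add_le (hlc : LogConcaveOn01 f) (hf : Continuous f)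
    (hpos : ∀ t ∈ Icc (0 : ℝ) 1, 0 < f t) {a b d : ℝ} (ha : 0 ≤ a) (hab : a < b) (hd : 0 ≤ d)
    (hbd : b + d ≤ 1) : condMean f (a + d) (b + d) ≤ condMean f a b + d := by
  have hfd : Continuous fun t => f (t + d) := hf.comp (continuous_add_const d)
  have hF : 0 < ∫ t in a..b, f t := intervalIntegral.intervalIntegral_pos_of_pos_on
    (hf.intervalIntegrable a b) (fun t ht => hpos t ⟨by linarith [ht.1], by linarith [ht.2]⟩) hab
  have hFd : 0 < ∫ t in a..b, f (t + d) := intervalIntegral.intervalIntegral_pos_of_pos_on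
    (hfd.intervalIntegrable a b) (fun t ht => hpos _ ⟨by linarith [ht.1], by linarith [ht.2]⟩) hab
  rw [condMean_add_add (hf.intervalIntegrable _ _) hFd.ne']
  gcongr
  exact condMean_le_condMean_of_ratio hab.le (hf.intervalIntegrable a b)
    (hfd.intervalIntegrable a b) hF hFd fun s hs t ht hst =>
      hlc.map_add_mul_le_map_add_mul hpos (ha.trans hs.1) hst hd (by linarith [ht.2])

end LogConcave

theorem stmt_13_general (f : ℝ → ℝ)
    (hf_cont : Continuous f) (hf_pos : ∀ t ∈ Icc (0:ℝ) 1, 0 < f t)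
    (hf_lc : LogConcaveOn01 f)
    (a b ε₁ ε₂ : ℝ) (ha : 0 ≤ a) (hab : a < b)
    (hε₁ : 0 ≤ ε₁)
    (hab' : a + ε₁ < b + ε₂) (hbε : b + max ε₁ ε₂ ≤ 1) :
    condMean f (a + ε₁) (b + ε₂) ≤ condMean f a b + max ε₁ ε₂ := by
  set ε := max ε₁ ε₂
  have hε₁ε : ε₁ ≤ ε := le_max_left ε₁ ε₂
  have hε₂ε : ε₂ ≤ ε := le_max_right ε₁ ε₂
  have haε : a + ε < b + ε₂ := by
    rcases max_choice ε₁ ε₂ with h | h <;> simp only [ε, h] <;> linarith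
  have hpos : ∀ t ∈ Icc (a + ε₁) (b + ε), 0 < f t :=
    fun t ht => hf_pos t ⟨by linarith [ht.1], by linarith [ht.2]⟩
  calc condMean f (a + ε₁) (b + ε₂)
      ≤ condMean f (a + ε) (b + ε₂) :=
        condMean_le_condMean_of_le_left (by linarith) haε (hf_cont.intervalIntegrable _ _)
          (hf_cont.intervalIntegrable _ _) fun t ht => hpos t ⟨ht.1, by linarith [ht.2]⟩
    _ ≤ condMean f (a + ε) (b + ε) :=
        condMean_le_condMean_of_le_right haε (by linarith) (hf_cont.intervalIntegrable _ _)
          (hf_cont.intervalIntegrable _ _) fun t ht => hpos t ⟨by linarith [ht.1], ht.2⟩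
    _ ≤ condMean f a b + ε :=
        hf_lc.condMean_add_add_le hf_cont hf_pos ha hab (hε₁.trans hε₁ε) hbε

/-- asymmetric translation property of conditional means for
logconcave densities. -/
theorem stmt_13 (f : ℝ → ℝ)
    (hf_cont : Continuous f) (hf_pos : ∀ t ∈ Icc (0:ℝ) 1, 0 < f t)
    (hf_lc : LogConcaveOn01 f)
    (a b ε₁ ε₂ : ℝ) (ha : 0 ≤ a) (hab : a < b) (hb : b ≤ 1)
    (hε₁ : 0 ≤ ε₁) (hε₂ : 0 ≤ ε₂)
    (hab' : a + ε₁ < b + ε₂) (hbε : b + max ε₁ ε₂ ≤ 1) :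
    condMean f (a + ε₁) (b + ε₂) ≤ condMean f a b + max ε₁ ε₂ :=
  stmt_13_general f hf_cont hf_pos hf_lc a b ε₁ ε₂ ha hab hε₁ hab' hbε
end

section
/- Let N ≥ 1 and suppose (s₁,…,s_N; q₂,…,q_{N+1}) maximizes the expected virtual surplus Σ_{k=1}^{N+1} ∫_{s_{k−1}}^{s_k} (t·v(q_k) − c(q_k))·h(t) dt over all 0 = s₀ ≤ s₁ ≤ … ≤ s_N ≤ s_{N+1} = 1 and 0 = q₁ ≤ q₂ ≤ … ≤ q_{N+1}, and suppose the maximizer satisfies 0 < s₁ < … < s_N < 1. Set x₁ = 0 and x_k = φ^m(s_{k−1}, s_k) for k = 2,…,N+1. Then q_k = q*(x_k) for k = 2,…,N+1 and s_k = μ^m(x_k, x_{k+1}) for k = 1,…,N. -/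
open MeasureTheory Set

/-- The seller's expected virtual surplus from the menu given by type cutoffs `s` and
qualities `q`: `Σ_{k=1}^{N+1} ∫_{s (k-1)}^{s k} (t·v(q k) − c(q k))·h(t) dt`. -/
noncomputable def menuSurplus (h v c : ℝ → ℝ) (N : ℕ) (s q : ℕ → ℝ) : ℝ :=
  ∑ k ∈ Finset.Icc 1 (N + 1),
    ∫ t in (s (k - 1))..(s k), (t * v (q k) - c (q k)) * h t

/-!
With the cutoffs fixed, the surplus of segment `k` is its mass times `x_k v(q) - c(q)`, where `x_k`
is the segment's conditional mean type, so each quality is optimally `q*(x_k)`; these choices are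
monotone by single crossing, hence feasible. With the qualities fixed, moving the cutoff `s_k`
changes the surplus at rate `h(s_k)` times the difference of `s_k v(q) - c(q)` between the two
adjacent items, which must vanish. By the envelope theorem `π'(x_k) = v(q_k)` and
`x_k π'(x_k) - π(x_k) = c(q_k)`, and integrating `π''` and `t π''` over `[x_k, x_{k+1}]` turns this
indifference into `s_k = μ^m(x_k, x_{k+1})`.
-/

open Filter Topology intervalIntegral Function

section IntervalAverages

variable {g : ℝ → ℝ} {a b : ℝ}

lemma integral_affine_mul (hg : Continuous g) (V C : ℝ) :
    ∫ t in a..b, (t * V - C) * g t = V * (∫ t in a..b, t * g t) - C * ∫ t in a..b, g t := by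
  rw [← intervalIntegral.integral_const_mul, ← intervalIntegral.integral_const_mul, ← integral_sub
    ((by fun_prop : Continuous fun t => V * (t * g t)).intervalIntegrable a b)
    ((by fun_prop : Continuous fun t => C * g t).intervalIntegrable a b)]
  exact integral_congr fun t _ => by ring

lemma integral_affine_mul_eq_condMean (hg : Continuous g) (hm : (∫ t in a..b, g t) ≠ 0)
    (V C : ℝ) :
    ∫ t in a..b, (t * V - C) * g t = (∫ t in a..b, g t) * (condMean g a b * V - C) := by
  rw [integral_affine_mul hg, condMean]
  field_simp

lemma integral_affine_mul_le_iff (hg : Continuous g)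
    (hm : 0 < ∫ t in a..b, g t) {V C V' C' : ℝ} :
    ∫ t in a..b, (t * V - C) * g t ≤ ∫ t in a..b, (t * V' - C') * g t ↔
      condMean g a b * V - C ≤ condMean g a b * V' - C' := by
  rw [integral_affine_mul_eq_condMean hg hm.ne', integral_affine_mul_eq_condMean hg hm.ne']
  exact mul_le_mul_iff_of_pos_left hm

lemma integral_affine_mul_lt_iff (hg : Continuous g)
    (hm : 0 < ∫ t in a..b, g t) {V C V' C' : ℝ} :
    ∫ t in a..b, (t * V - C) * g t < ∫ t in a..b, (t * V' - C') * g t ↔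
      condMean g a b * V - C < condMean g a b * V' - C' := by
  rw [integral_affine_mul_eq_condMean hg hm.ne', integral_affine_mul_eq_condMean hg hm.ne']
  exact mul_lt_mul_iff_of_pos_left hm

lemma condMean_mem_Ioo (hg : Continuous g) (hab : a < b) (hpos : ∀ t ∈ Icc a b, 0 < g t) :
    condMean g a b ∈ Ioo a b := by
  have hpos' : ∀ t ∈ Ioo a b, 0 < g t := fun t ht => hpos t (Ioo_subset_Icc_self ht)
  have hm : 0 < ∫ t in a..b, g t :=
    intervalIntegral_pos_of_pos_on (hg.intervalIntegrable a b) hpos' hab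
  have hleft : 0 < ∫ t in a..b, (t * 1 - a) * g t :=
    intervalIntegral_pos_of_pos_on ((by fun_prop : Continuous _).intervalIntegrable a b)
      (fun t ht => mul_pos (by linarith [ht.1]) (hpos' t ht)) hab
  have hright : 0 < ∫ t in a..b, (t * (-1) - (-b)) * g t :=
    intervalIntegral_pos_of_pos_on ((by fun_prop : Continuous _).intervalIntegrable a b)
      (fun t ht => mul_pos (by linarith [ht.2]) (hpos' t ht)) hab
  rw [integral_affine_mul_eq_condMean hg hm.ne'] at hleft hright
  constructor <;> nlinarith

end IntervalAverages

lemma eq_zero_of_eventually_integral_nonpos {F : ℝ → ℝ} {a : ℝ} (hF : Continuous F)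
    (hmax : ∀ᶠ w in 𝓝 a, ∫ t in a..w, F t ≤ 0) : F a = 0 := by
  have hloc : IsLocalMax (fun w => ∫ t in a..w, F t) a := by
    filter_upwards [hmax] with w hw
    simpa using hw
  exact hloc.hasDerivAt_eq_zero <| integral_hasDerivAt_right (hF.intervalIntegrable a a)
    (hF.stronglyMeasurableAtFilter _ _) hF.continuousAt

lemma deriv_eq_of_affine_le {f : ℝ → ℝ} {y V C : ℝ} (hf : DifferentiableAt ℝ f y)
    (hle : ∀ᶠ t in 𝓝 y, t * V - C ≤ f t) (heq : f y = y * V - C) : deriv f y = V := by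
  have hloc : IsLocalMin (fun t => f t - (t * V - C)) y := by
    filter_upwards [hle] with t ht
    simp only [heq, sub_self]
    linarith
  have hd : HasDerivAt (fun t => f t - (t * V - C)) (deriv f y - 1 * V) y :=
    hf.hasDerivAt.sub (((hasDerivAt_id' y).mul_const V).sub_const C)
  linarith [hloc.hasDerivAt_eq_zero hd]

lemma envelope_identities {π v c qstar : ℝ → ℝ} (hπ : Differentiable ℝ π)
    (hqstar : ∀ t ∈ Ioc (0 : ℝ) 1, 0 ≤ qstar t ∧
      ∀ q, 0 ≤ q → t * v q - c q ≤ t * v (qstar t) - c (qstar t))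
    (hπval : ∀ t ∈ Ioc (0 : ℝ) 1, π t = t * v (qstar t) - c (qstar t))
    {y : ℝ} (hy : y ∈ Ioo 0 1) :
    deriv π y = v (qstar y) ∧ y * deriv π y - π y = c (qstar y) := by
  have hyI : y ∈ Ioc (0 : ℝ) 1 := Ioo_subset_Ioc_self hy
  have hderiv : deriv π y = v (qstar y) := by
    refine deriv_eq_of_affine_le (hπ y) ?_ (hπval y hyI)
    filter_upwards [Ioo_mem_nhds hy.1 hy.2] with t ht
    rw [hπval t (Ioo_subset_Ioc_self ht)]
    exact (hqstar t (Ioo_subset_Ioc_self ht)).2 _ (hqstar y hyI).1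
  refine ⟨hderiv, ?_⟩
  rw [hderiv, hπval y hyI]
  ring

lemma condMean_deriv_deriv {f : ℝ → ℝ} (hf : ContDiff ℝ 2 f) (a b : ℝ) :
    condMean (deriv (deriv f)) a b
      = ((b * deriv f b - f b) - (a * deriv f a - f a)) / (deriv f b - deriv f a) := by
  have hf1 : ContDiff ℝ 1 (deriv f) := hf.iterate_deriv' 1 1
  have hd : ∀ t, HasDerivAt f (deriv f t) t :=
    fun t => (hf.differentiable two_ne_zero t).hasDerivAt
  have hd' : ∀ t, HasDerivAt (deriv f) (deriv (deriv f) t) t :=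
    fun t => (hf1.differentiable one_ne_zero t).hasDerivAt
  have hc : Continuous (deriv (deriv f)) := hf1.continuous_deriv le_rfl
  rw [condMean, integral_eq_sub_of_hasDerivAt (fun t _ => hd' t) (hc.intervalIntegrable a b),
    integral_eq_sub_of_hasDerivAt (f := fun t => t * deriv f t - f t)
      (fun t _ => (((hasDerivAt_id' t).mul (hd' t)).sub (hd t)).congr_deriv (by ring))
      ((by fun_prop : Continuous fun t => t * deriv (deriv f) t).intervalIntegrable a b)]

/-- `(V₁, C₁)` and `(V₂, C₂)` are slope and minus intercept of the tangent lines of `f` at `a`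
and `b`. -/
lemma condMean_deriv_deriv_eq_of_indifference {f : ℝ → ℝ} (hf : ContDiff ℝ 2 f)
    {a b σ V₁ V₂ C₁ C₂ : ℝ} (hab : deriv f a ≠ deriv f b)
    (ha : deriv f a = V₁ ∧ a * deriv f a - f a = C₁)
    (hb : deriv f b = V₂ ∧ b * deriv f b - f b = C₂)
    (hσ : σ * V₁ - C₁ = σ * V₂ - C₂) : condMean (deriv (deriv f)) a b = σ := by
  rw [condMean_deriv_deriv hf, ha.2, hb.2, div_eq_iff (sub_ne_zero.2 hab.symm), hb.1, ha.1]
  linarith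

lemma maximizer_le_maximizer_of_lt {v c : ℝ → ℝ} (hv : StrictMonoOn v (Ici 0)) {a b qa qb : ℝ}
    (hab : a < b) (hqa : 0 ≤ qa) (hqb : 0 ≤ qb)
    (hmaxa : a * v qb - c qb ≤ a * v qa - c qa) (hmaxb : b * v qa - c qa ≤ b * v qb - c qb) :
    qa ≤ qb :=
  (hv.le_iff_le hqa hqb).1 <| by nlinarith

lemma sum_integral_update_sub {g : ℕ → ℝ → ℝ} (hg : ∀ j, Continuous (g j)) {N k : ℕ}
    (hk1 : 1 ≤ k) (hkN : k ≤ N) (s : ℕ → ℝ) (w : ℝ) :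
    (∑ j ∈ Finset.Icc 1 (N + 1), ∫ t in update s k w (j - 1)..update s k w j, g j t)
      - ∑ j ∈ Finset.Icc 1 (N + 1), ∫ t in s (j - 1)..s j, g j t
      = ∫ t in s k..w, (g k t - g (k + 1) t) := by
  have hI : ∀ j a b, IntervalIntegrable (g j) volume a b := fun j => (hg j).intervalIntegrable
  rw [← Finset.sum_sub_distrib, Finset.sum_congr rfl fun j _ =>
    integral_interval_sub_interval_comm (hI j _ _) (hI j _ _) (hI j _ _), Finset.sum_sub_distrib,
    Finset.sum_eq_single_of_mem (k + 1) (Finset.mem_Icc.2 ⟨by omega, by omega⟩),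
    Finset.sum_eq_single_of_mem k (Finset.mem_Icc.2 ⟨hk1, by omega⟩)]
  · rw [Nat.add_sub_cancel, update_self, integral_symm (s k) w, integral_symm (s k) w,
      integral_sub (hI _ _ _) (hI _ _ _)]
    ring
  · intro j _ hjk
    rw [update_of_ne hjk, integral_same]
  · intro j hj hjk
    rw [update_of_ne (show j - 1 ≠ k by have := (Finset.mem_Icc.1 hj).1; omega), integral_same]

section Menu

variable {h v c : ℝ → ℝ} {N : ℕ} {s q : ℕ → ℝ}

lemma menuSurplus_update_sub (hh : Continuous h) {k : ℕ} (hk1 : 1 ≤ k) (hkN : k ≤ N) (w : ℝ) :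
    menuSurplus h v c N (update s k w) q - menuSurplus h v c N s q
      = ∫ t in s k..w,
          ((t * v (q k) - c (q k)) - (t * v (q (k + 1)) - c (q (k + 1)))) * h t := by
  rw [menuSurplus, menuSurplus, sum_integral_update_sub (fun j => by fun_prop) hk1 hkN]
  simp_rw [sub_mul]

lemma update_le_update_succ (hs : ∀ j ≤ N, s j ≤ s (j + 1)) {k : ℕ} (hk1 : 1 ≤ k) {w : ℝ}
    (hw : w ∈ Icc (s (k - 1)) (s (k + 1))) :
    ∀ j ≤ N, update s k w j ≤ update s k w (j + 1) := by
  intro j hj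
  by_cases hjk : j = k
  · subst hjk
    rw [update_self, update_of_ne (by omega)]
    exact hw.2
  by_cases hjk' : j + 1 = k
  · obtain rfl : j = k - 1 := by omega
    rw [update_of_ne hjk, hjk', update_self]
    exact hw.1
  rw [update_of_ne hjk, update_of_ne hjk']
  exact hs j hj

lemma cutoff_indifference (hh : Continuous h) {k : ℕ} (hk1 : 1 ≤ k) (hkN : k ≤ N)
    (hs : ∀ j ≤ N, s j < s (j + 1)) (hhk : h (s k) ≠ 0)
    (hmax : ∀ s' : ℕ → ℝ, s' 0 = s 0 → s' (N + 1) = s (N + 1) →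
      (∀ j ≤ N, s' j ≤ s' (j + 1)) → menuSurplus h v c N s' q ≤ menuSurplus h v c N s q) :
    s k * v (q k) - c (q k) = s k * v (q (k + 1)) - c (q (k + 1)) := by
  have hprev : s (k - 1) < s k := by simpa [Nat.sub_add_cancel hk1] using hs (k - 1) (by omega)
  have hnear : ∀ᶠ w in 𝓝 (s k), ∫ t in s k..w,
      ((t * v (q k) - c (q k)) - (t * v (q (k + 1)) - c (q (k + 1)))) * h t ≤ 0 := by
    filter_upwards [Ioo_mem_nhds hprev (hs k hkN)] with w hw
    rw [← menuSurplus_update_sub hh hk1 hkN, sub_nonpos]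
    refine hmax _ (update_of_ne (by omega) _ _) (update_of_ne (by omega) _ _)
      (update_le_update_succ (fun j hj => (hs j hj).le) hk1 (Ioo_subset_Icc_self hw))
  have hzero := eq_zero_of_eventually_integral_nonpos (by fun_prop) hnear
  exact sub_eq_zero.1 ((mul_eq_zero.1 hzero).resolve_right hhk)


lemma cutoff_bounds (hs : StrictMonoOn s (Iic (N + 1))) (hs0 : s 0 = 0) (hslast : s (N + 1) = 1)
    {j : ℕ} (hj1 : 1 ≤ j) (hjN : j ≤ N + 1) : 0 ≤ s (j - 1) ∧ s (j - 1) < s j ∧ s j ≤ 1 := by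
  have hmem : ∀ i ≤ N + 1, i ∈ Iic (N + 1) := fun i hi => hi
  refine ⟨?_, hs (hmem _ (by omega)) (hmem _ hjN) (by omega), ?_⟩
  · simpa [hs0] using hs.monotoneOn (hmem 0 (by omega)) (hmem _ (by omega)) (Nat.zero_le _)
  · simpa [hslast] using hs.monotoneOn (hmem _ hjN) (hmem _ le_rfl) hjN

lemma condMean_mem_segment (hh : Continuous h) (hh_pos : ∀ t ∈ Icc (0 : ℝ) 1, 0 < h t)
    (hs : StrictMonoOn s (Iic (N + 1))) (hs0 : s 0 = 0) (hslast : s (N + 1) = 1)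
    {j : ℕ} (hj1 : 1 ≤ j) (hjN : j ≤ N + 1) :
    condMean h (s (j - 1)) (s j) ∈ Ioo (s (j - 1)) (s j) ∩ Ioo 0 1 := by
  obtain ⟨h0, hlt, h1⟩ := cutoff_bounds hs hs0 hslast hj1 hjN
  have hm := condMean_mem_Ioo hh hlt fun t ht => hh_pos t ⟨h0.trans ht.1, ht.2.trans h1⟩
  exact ⟨hm, h0.trans_lt hm.1, hm.2.trans_le h1⟩

/-- Otherwise replacing every quality by the optimal one for its segment's mean type is feasible,
by single crossing, and strictly profitable. -/
lemma quality_eq_qstar_condMean (hh : Continuous h) (hh_pos : ∀ t ∈ Icc (0 : ℝ) 1, 0 < h t)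
    (hv : StrictMonoOn v (Ici 0)) {qstar : ℝ → ℝ}
    (hqstar : ∀ t ∈ Ioc (0 : ℝ) 1, 0 ≤ qstar t ∧
      (∀ q, 0 ≤ q → t * v q - c q ≤ t * v (qstar t) - c (qstar t)) ∧
      (∀ q, 0 ≤ q → t * v q - c q = t * v (qstar t) - c (qstar t) → q = qstar t))
    (hs : StrictMonoOn s (Iic (N + 1))) (hs0 : s 0 = 0) (hslast : s (N + 1) = 1)
    (hq1 : q 1 = 0) (hq_nonneg : ∀ k, 1 ≤ k → k ≤ N + 1 → 0 ≤ q k)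
    (hmax : ∀ q' : ℕ → ℝ, q' 1 = 0 → (∀ k, 1 ≤ k → k ≤ N → q' k ≤ q' (k + 1)) →
      (∀ k, 1 ≤ k → k ≤ N + 1 → 0 ≤ q' k) → menuSurplus h v c N s q' ≤ menuSurplus h v c N s q)
    {k : ℕ} (hk2 : 2 ≤ k) (hkN : k ≤ N + 1) : q k = qstar (condMean h (s (k - 1)) (s k)) := by
  set m : ℕ → ℝ := fun j => condMean h (s (j - 1)) (s j)
  have hseg : ∀ j, 1 ≤ j → j ≤ N + 1 →
      m j ∈ Ioo (s (j - 1)) (s j) ∧ m j ∈ Ioc 0 1 ∧ 0 < ∫ t in s (j - 1)..s j, h t := by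
    intro j hj1 hjN
    obtain ⟨h0, hlt, h1⟩ := cutoff_bounds hs hs0 hslast hj1 hjN
    obtain ⟨hm, hm01⟩ := condMean_mem_segment hh hh_pos hs hs0 hslast hj1 hjN
    exact ⟨hm, Ioo_subset_Ioc_self hm01, intervalIntegral_pos_of_pos_on (hh.intervalIntegrable _ _)
      (fun t ht => hh_pos t ⟨h0.trans ht.1.le, ht.2.le.trans h1⟩) hlt⟩
  set Q : ℕ → ℝ := fun j => if j = 1 then 0 else qstar (m j)
  have hQ : ∀ j, 2 ≤ j → Q j = qstar (m j) := fun j hj => if_neg (by omega)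
  have hQ_nonneg : ∀ j, 1 ≤ j → j ≤ N + 1 → 0 ≤ Q j := by
    intro j hj1 hjN
    rcases eq_or_lt_of_le hj1 with rfl | hj2
    · exact le_rfl
    · exact (hQ j hj2).symm ▸ (hqstar _ (hseg j hj1 hjN).2.1).1
  have hQ_mono : ∀ j, 1 ≤ j → j ≤ N → Q j ≤ Q (j + 1) := by
    intro j hj1 hjN
    rcases eq_or_lt_of_le hj1 with rfl | hj2
    · exact hQ_nonneg 2 one_le_two (by omega)
    obtain ⟨hmj, hmj', -⟩ := hseg j hj1 (by omega)
    obtain ⟨hmj1, hmj1', -⟩ := hseg (j + 1) (by omega) (by omega)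
    rw [hQ j hj2, hQ (j + 1) (by omega)]
    exact maximizer_le_maximizer_of_lt hv (hmj.2.trans (by simpa using hmj1.1)) (hqstar _ hmj').1
      (hqstar _ hmj1').1 ((hqstar _ hmj').2.1 _ (hqstar _ hmj1').1)
      ((hqstar _ hmj1').2.1 _ (hqstar _ hmj').1)
  by_contra hne
  refine (hmax Q rfl hQ_mono hQ_nonneg).not_gt (Finset.sum_lt_sum (fun j hj => ?_) ⟨k, ?_, ?_⟩)
  · obtain ⟨hj1, hjN⟩ := Finset.mem_Icc.1 hj
    rcases eq_or_lt_of_le hj1 with rfl | hj2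
    · simp [Q, hq1]
    obtain ⟨-, hmj, hmass⟩ := hseg j hj1 hjN
    rw [hQ j hj2, integral_affine_mul_le_iff hh hmass]
    exact (hqstar _ hmj).2.1 _ (hq_nonneg j hj1 hjN)
  · exact Finset.mem_Icc.2 ⟨by omega, hkN⟩
  · obtain ⟨-, hmk, hmass⟩ := hseg k (by omega) hkN
    rw [hQ k hk2, integral_affine_mul_lt_iff hh hmass]
    exact ((hqstar _ hmk).2.1 _ (hq_nonneg k (by omega) hkN)).lt_of_ne
      fun heq => hne ((hqstar _ hmk).2.2 _ (hq_nonneg k (by omega) hkN) heq)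

end Menu

theorem stmt_19_general (h v c π qstar : ℝ → ℝ) (N : ℕ)
    (hh_cont : Continuous h) (hh_pos : ∀ t ∈ Icc (0:ℝ) 1, 0 < h t)
    (hv : ContDiff ℝ 2 v)
    (hv' : ∀ q, 0 ≤ q → 0 < deriv v q)
    (hv0 : v 0 = 0) (hc0 : c 0 = 0)
    (hqstar : ∀ t ∈ Ioc (0:ℝ) 1, 0 ≤ qstar t ∧
      (∀ q, 0 ≤ q → t * v q - c q ≤ t * v (qstar t) - c (qstar t)) ∧
      (∀ q, 0 ≤ q → t * v q - c q = t * v (qstar t) - c (qstar t) → q = qstar t))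
    (hπ : ContDiff ℝ 2 π)
    (hπval : ∀ t ∈ Ioc (0:ℝ) 1, π t = t * v (qstar t) - c (qstar t))
    (hπ0 : π 0 = 0) (hπ'0 : deriv π 0 = 0)
    (hπ'' : ∀ t ∈ Ioc (0:ℝ) 1, 0 < deriv (deriv π) t)
    (s q : ℕ → ℝ)
    (hs0 : s 0 = 0) (hslast : s (N + 1) = 1)
    (hs_strict : ∀ k ≤ N, s k < s (k + 1))
    (hq1 : q 1 = 0) (hq_mono : ∀ k, 1 ≤ k → k ≤ N → q k ≤ q (k + 1))
    (hq_nonneg : ∀ k, 1 ≤ k → k ≤ N + 1 → 0 ≤ q k)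
    (hmax : ∀ s' q' : ℕ → ℝ, s' 0 = 0 → s' (N + 1) = 1 →
      (∀ k ≤ N, s' k ≤ s' (k + 1)) → q' 1 = 0 →
      (∀ k, 1 ≤ k → k ≤ N → q' k ≤ q' (k + 1)) →
      (∀ k, 1 ≤ k → k ≤ N + 1 → 0 ≤ q' k) →
      menuSurplus h v c N s' q' ≤ menuSurplus h v c N s q)
    (x : ℕ → ℝ) (hx1 : x 1 = 0)
    (hxk : ∀ k, 2 ≤ k → k ≤ N + 1 → x k = condMean h (s (k - 1)) (s k)) :
    (∀ k, 2 ≤ k → k ≤ N + 1 → q k = qstar (x k)) ∧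
    (∀ k, 1 ≤ k → k ≤ N → s k = condMean (deriv (deriv π)) (x k) (x (k + 1))) := by
  have hs : StrictMonoOn s (Iic (N + 1)) :=
    strictMonoOn_Iic_of_lt_succ fun j hj => by simpa using hs_strict j (by omega)
  have hv_mono : StrictMonoOn v (Ici 0) :=
    strictMonoOn_of_deriv_pos (convex_Ici 0) hv.continuous.continuousOn
      fun t ht => hv' t (interior_subset ht)
  have hq : ∀ k, 2 ≤ k → k ≤ N + 1 → q k = qstar (x k) := fun k hk2 hkN =>
    hxk k hk2 hkN ▸ quality_eq_qstar_condMean hh_cont hh_pos hv_mono hqstar hs hs0 hslast hq1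
      hq_nonneg (fun q' => hmax s q' hs0 hslast fun j hj => (hs_strict j hj).le) hk2 hkN
  have hx : ∀ j, 1 ≤ j → j ≤ N + 1 → x j ∈ Ico (s (j - 1)) (s j) ∧
      deriv π (x j) = v (q j) ∧ x j * deriv π (x j) - π (x j) = c (q j) := by
    intro j hj1 hjN
    rcases eq_or_lt_of_le hj1 with rfl | hj2
    · simpa [hx1, hs0, hq1, hπ'0, hπ0, hv0, hc0] using (cutoff_bounds hs hs0 hslast hj1 hjN).2.1
    obtain ⟨hxs, hx01⟩ := hxk j hj2 hjN ▸ condMean_mem_segment hh_cont hh_pos hs hs0 hslast hj1 hjN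
    exact ⟨Ioo_subset_Ico_self hxs, hq j hj2 hjN ▸ envelope_identities (hπ.differentiable two_ne_zero)
      (fun t ht => ⟨(hqstar t ht).1, (hqstar t ht).2.1⟩) hπval hx01⟩
  have hπ'_mono : StrictMonoOn (deriv π) (Icc 0 1) :=
    strictMonoOn_of_deriv_pos (convex_Icc 0 1) (hπ.continuous_deriv one_le_two).continuousOn
      fun t ht => hπ'' t (Ioo_subset_Ioc_self (by rwa [interior_Icc] at ht))
  refine ⟨hq, fun k hk1 hkN => ?_⟩
  obtain ⟨⟨hk_lo, hk_hi⟩, hrel_k⟩ := hx k hk1 (by omega)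
  obtain ⟨⟨hk'_lo, hk'_hi⟩, hrel_k'⟩ := hx (k + 1) (by omega) (by omega)
  rw [Nat.add_sub_cancel] at hk'_lo
  have h0 := (cutoff_bounds hs hs0 hslast hk1 (by omega)).1
  have h1 := (cutoff_bounds hs hs0 hslast (j := k + 1) (by omega) (by omega)).2.2
  refine (condMean_deriv_deriv_eq_of_indifference hπ ?_ hrel_k hrel_k' ?_).symm
  · exact (hπ'_mono ⟨by linarith, by linarith⟩ ⟨by linarith, by linarith⟩ (by linarith)).ne
  · exact cutoff_indifference hh_cont hk1 hkN hs_strict (hh_pos _ ⟨by linarith, by linarith⟩).ne'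
      fun s' hs'0 hs'last hs'_mono =>
        hmax s' q (hs'0.trans hs0) (hs'last.trans hslast) hs'_mono hq1 hq_mono hq_nonneg

/-- dual expectations characterization of the optimal finite menu in
the coarse nonlinear pricing problem. -/
theorem stmt_19 (h v c π qstar : ℝ → ℝ) (N : ℕ) (hN : 1 ≤ N)
    (hh_cont : Continuous h) (hh_pos : ∀ t ∈ Icc (0:ℝ) 1, 0 < h t)
    (hh_prob : (∫ t in (0:ℝ)..1, h t) = 1)
    (hv : ContDiff ℝ 2 v) (hc : ContDiff ℝ 2 c)
    (hv' : ∀ q, 0 ≤ q → 0 < deriv v q) (hv'' : ∀ q, 0 ≤ q → deriv (deriv v) q < 0)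
    (hc' : ∀ q, 0 ≤ q → 0 < deriv c q) (hc'' : ∀ q, 0 ≤ q → 0 < deriv (deriv c) q)
    (hv0 : v 0 = 0) (hc0 : c 0 = 0)
    (hqstar : ∀ t ∈ Ioc (0:ℝ) 1, 0 ≤ qstar t ∧
      (∀ q, 0 ≤ q → t * v q - c q ≤ t * v (qstar t) - c (qstar t)) ∧
      (∀ q, 0 ≤ q → t * v q - c q = t * v (qstar t) - c (qstar t) → q = qstar t))
    (hπ : ContDiff ℝ 2 π)
    (hπval : ∀ t ∈ Ioc (0:ℝ) 1, π t = t * v (qstar t) - c (qstar t))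
    (hπ0 : π 0 = 0) (hπ'0 : deriv π 0 = 0)
    (hπ'' : ∀ t ∈ Ioc (0:ℝ) 1, 0 < deriv (deriv π) t)
    (s q : ℕ → ℝ)
    (hs0 : s 0 = 0) (hslast : s (N + 1) = 1)
    (hs_strict : ∀ k ≤ N, s k < s (k + 1))
    (hq1 : q 1 = 0) (hq_mono : ∀ k, 1 ≤ k → k ≤ N → q k ≤ q (k + 1))
    (hq_nonneg : ∀ k, 1 ≤ k → k ≤ N + 1 → 0 ≤ q k)
    (hmax : ∀ s' q' : ℕ → ℝ, s' 0 = 0 → s' (N + 1) = 1 →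
      (∀ k ≤ N, s' k ≤ s' (k + 1)) → q' 1 = 0 →
      (∀ k, 1 ≤ k → k ≤ N → q' k ≤ q' (k + 1)) →
      (∀ k, 1 ≤ k → k ≤ N + 1 → 0 ≤ q' k) →
      menuSurplus h v c N s' q' ≤ menuSurplus h v c N s q)
    (x : ℕ → ℝ) (hx1 : x 1 = 0)
    (hxk : ∀ k, 2 ≤ k → k ≤ N + 1 → x k = condMean h (s (k - 1)) (s k)) :
    (∀ k, 2 ≤ k → k ≤ N + 1 → q k = qstar (x k)) ∧
    (∀ k, 1 ≤ k → k ≤ N → s k = condMean (deriv (deriv π)) (x k) (x (k + 1))) :=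
  stmt_19_general h v c π qstar N hh_cont hh_pos hv hv' hv0 hc0 hqstar hπ hπval hπ0 hπ'0 hπ'' s q
    hs0 hslast hs_strict hq1 hq_mono hq_nonneg hmax x hx1 hxk
end
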